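/- arXiv:1303.3455 — 6 statements merged into one kernel-verified Lean document; each statement's English description precedes it below -/
import Mathlib

section
/- Let A be a real r × m matrix and let σ : Fin r → Fin m be any injective map selecting r columns of A. Then the square of the determinant of the r × r submatrix of A with columns σ is at most det(A · Aᵀ), the Gram determinant of the rows of A: (det (A.submatrix id σ))² ≤ det(A · Aᵀ). -/
open Matrix Finset

lemma psd_det_nonneg {n : Type*} [Fintype n] [DecidableEq n]
    {K : Matrix n n ℝ} (hK : K.PosSemidef) : 0 ≤ K.det := by
  rw [hK.1.det_eq_prod_eigenvalues]
  exact Finset.prod_nonneg fun i _ => hK.eigenvalues_nonneg i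

lemma one_le_det_one_add_psd {n : Type*} [Fintype n] [DecidableEq n]
    {K : Matrix n n ℝ} (hK : K.PosSemidef) : 1 ≤ (1 + K).det := by
  have hH := hK.1
  have hspec := hH.spectral_theorem
  set U : Matrix n n ℝ := (hH.eigenvectorUnitary : Matrix n n ℝ) with hU
  set D : Matrix n n ℝ := diagonal (RCLike.ofReal ∘ hH.eigenvalues) with hD
  have hUU : U * star U = 1 := (Matrix.mem_unitaryGroup_iff).mp hH.eigenvectorUnitary.2
  have h1 : (1 : Matrix n n ℝ) + K = U * (1 + D) * star U := by
    rw [mul_add, add_mul, mul_one, hUU, hspec]; rfl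
  have hdetU : U.det * (star U).det = 1 := by
    rw [← det_mul, hUU, det_one]
  have h2 : (1 + K).det = (1 + D).det := by
    rw [h1, det_mul, det_mul]
    calc U.det * (1 + D).det * (star U).det
        = U.det * (star U).det * (1 + D).det := by ring
      _ = (1 + D).det := by rw [hdetU, one_mul]
  rw [h2]
  have h3 : (1 : Matrix n n ℝ) + D = diagonal (fun i => 1 + hH.eigenvalues i) := by
    rw [hD, ← diagonal_one, diagonal_add]
    congr 1
  rw [h3, det_diagonal]
  calc (1:ℝ) = ∏ _i : n, 1 := by simp
    _ ≤ ∏ i, (1 + hH.eigenvalues i) :=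
      Finset.prod_le_prod (fun i _ => zero_le_one)
        (fun i _ => by linarith [hK.eigenvalues_nonneg i])

lemma det_self_mul_transpose_le {n p : Type*} [Fintype n] [DecidableEq n] [Fintype p]
    (S : Matrix n n ℝ) (T : Matrix n p ℝ) :
    (S * Sᵀ).det ≤ (S * Sᵀ + T * Tᵀ).det := by
  have hpsd : (S * Sᵀ + T * Tᵀ).PosSemidef := by
    have h1 := posSemidef_self_mul_conjTranspose S
    have h2 := posSemidef_self_mul_conjTranspose T
    rw [conjTranspose_eq_transpose_of_trivial] at h1 h2
    exact h1.add h2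
  by_cases hS : IsUnit S.det
  · have hSinv : S * S⁻¹ = 1 := mul_nonsing_inv S hS
    set K : Matrix n p ℝ := S⁻¹ * T with hK
    have hKK : (K * Kᵀ).PosSemidef := by
      have := posSemidef_self_mul_conjTranspose K
      rwa [conjTranspose_eq_transpose_of_trivial] at this
    have key : S * Sᵀ + T * Tᵀ = S * (1 + K * Kᵀ) * Sᵀ := by
      rw [hK, transpose_mul, mul_add, mul_one, add_mul]
      congr 1
      have hassoc : S * (S⁻¹ * T * (Tᵀ * S⁻¹ᵀ)) * Sᵀ
          = (S * S⁻¹) * ((T * Tᵀ) * (S⁻¹ᵀ * Sᵀ)) := by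
        simp only [← Matrix.mul_assoc]
      have h1 : S⁻¹ᵀ * Sᵀ = 1 := by rw [← transpose_mul, hSinv, transpose_one]
      rw [hassoc, hSinv, h1, mul_one, one_mul]
    rw [key]
    simp only [det_mul, det_transpose]
    have h := one_le_det_one_add_psd hKK
    nlinarith [mul_self_nonneg S.det, mul_nonneg (mul_self_nonneg S.det) (sub_nonneg.2 h)]
  · have h0 : S.det = 0 := by simpa [isUnit_iff_ne_zero] using hS
    rw [det_mul, det_transpose, h0, mul_zero]
    exact psd_det_nonneg hpsd

/-- For any injective selection `σ` of `r` columns of a real `r × m` matrix `A`,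
the square of the corresponding `r × r` minor is bounded by the Gram determinant
of the rows of `A`. -/
theorem sq_minor_le_gram_det (r m : ℕ) (A : Matrix (Fin r) (Fin m) ℝ)
    (σ : Fin r → Fin m) (hσ : Function.Injective σ) :
    (A.submatrix id σ).det ^ 2 ≤ (A * A.transpose).det := by
  classical
  set S : Matrix (Fin r) (Fin r) ℝ := A.submatrix id σ with hS
  set T : Matrix (Fin r) {k : Fin m // k ∉ Set.range σ} ℝ := fun i k => A i k.1 with hT
  have split : A * Aᵀ = S * Sᵀ + T * Tᵀ := by
    ext i j
    simp only [mul_apply, Matrix.add_apply, transpose_apply, hS, hT, submatrix_apply, id_eq]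
    have hsum : ∀ f : Fin m → ℝ, ∑ k, f k
        = (∑ i : Fin r, f (σ i)) + ∑ k : {k : Fin m // k ∉ Set.range σ}, f k.1 := by
      intro f
      have h1 : ∑ k ∈ Finset.univ.image σ, f k = ∑ i : Fin r, f (σ i) :=
        Finset.sum_image (fun a _ b _ h => hσ h)
      have h2 : ∑ k ∈ (Finset.univ.image σ)ᶜ, f k
          = ∑ k : {k : Fin m // k ∉ Set.range σ}, f k.1 :=
        Finset.sum_subtype _ (by simp [Set.range]) f
      rw [← Finset.sum_add_sum_compl (Finset.univ.image σ) f, h1, h2]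
    exact hsum fun k => A i k * A j k
  rw [split]
  have hsq : S.det ^ 2 = (S * Sᵀ).det := by rw [det_mul, det_transpose, sq]
  rw [hsq]
  exact det_self_mul_transpose_le S T
end

section
/- Let r ≤ m be natural numbers and let A be a real r × m matrix. Then there exists a strictly monotone map σ : Fin r → Fin m such that the corresponding r × r minor satisfies (det (A.submatrix id σ))² ≥ det(A · Aᵀ) / binom(m, r). In particular, the maximal r × r minor J₁ of A in absolute value satisfies |det J₁|² ≥ binom(m, r)⁻¹ · det(A · Aᵀ). -/
open Finset Matrix Equiv BigOperators

namespace CBaux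

instance instDecStrictMono {r m : ℕ} : DecidablePred (StrictMono : (Fin r → Fin m) → Prop) :=
  fun σ => decidable_of_iff (∀ a b : Fin r, a < b → σ a < σ b)
    ⟨fun h _ _ hab => h _ _ hab, fun h _ _ hab => h hab⟩

/-- The equivalence between strictly monotone maps and `r`-element subsets. -/
def monoEquiv (r m : ℕ) :
    {σ : Fin r → Fin m // StrictMono σ} ≃ {s : Finset (Fin m) // s.card = r} where
  toFun σ := ⟨Finset.image σ.1 Finset.univ, by
    rw [Finset.card_image_of_injective _ σ.2.injective, Finset.card_univ, Fintype.card_fin]⟩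
  invFun s := ⟨fun i => s.1.orderEmbOfFin s.2 i, (s.1.orderEmbOfFin s.2).strictMono⟩
  left_inv σ := by
    apply Subtype.ext
    exact (Finset.orderEmbOfFin_unique _ (fun x => Finset.mem_image_of_mem _ (Finset.mem_univ x))
      σ.2).symm
  right_inv s := by
    apply Subtype.ext
    have h := Finset.range_orderEmbOfFin s.1 s.2
    ext x
    simp only [Finset.mem_image, Finset.mem_univ, true_and]
    constructor
    · rintro ⟨i, rfl⟩; exact Finset.orderEmbOfFin_mem _ _ _
    · intro hx
      have : x ∈ Set.range (s.1.orderEmbOfFin s.2) := by rw [h]; exact Finset.mem_coe.mpr hx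
      obtain ⟨i, hi⟩ := this
      exact ⟨i, hi⟩
  
theorem card_mono (r m : ℕ) :
    Fintype.card {σ : Fin r → Fin m // StrictMono σ} = m.choose r := by
  rw [Fintype.card_congr (monoEquiv r m), Fintype.card_finset_len, Fintype.card_fin]

/-- Cauchy–Binet formula. -/
theorem cauchy_binet {r m : ℕ} (A : Matrix (Fin r) (Fin m) ℝ) (B : Matrix (Fin m) (Fin r) ℝ) :
    (A * B).det = ∑ σ : {σ : Fin r → Fin m // StrictMono σ},
      (A.submatrix id σ.1).det * (B.submatrix σ.1 id).det := by
  classical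
  -- step 1: expand by multilinearity
  have h1 : (A * B).det
      = ∑ f : Fin r → Fin m, (∏ i, A i (f i)) * (B.submatrix f id).det := by
    have : (A * B).det = Matrix.detRowAlternating (fun i => ∑ k : Fin m, A i k • B k) := by
      congr 1
      ext i j
      simp [Matrix.mul_apply]
    rw [this]
    rw [show (Matrix.detRowAlternating (fun i => ∑ k : Fin m, A i k • B k) : ℝ)
        = (Matrix.detRowAlternating.toMultilinearMap) (fun i => ∑ k : Fin m, A i k • B k)
        from rfl]
    rw [MultilinearMap.map_sum]
    refine Finset.sum_congr rfl fun f _ => ?_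
    rw [show (fun i => A i (f i) • B (f i)) = fun i => (fun i => A i (f i)) i • (fun i => B (f i)) i from rfl]
    rw [MultilinearMap.map_smul_univ]
    simp only [smul_eq_mul]
    congr 1
  rw [h1]
  -- step 2: kill non-injective terms
  have h2 : ∑ f : Fin r → Fin m, (∏ i, A i (f i)) * (B.submatrix f id).det
      = ∑ f : {f : Fin r → Fin m // Function.Injective f},
          (∏ i, A i (f.1 i)) * (B.submatrix f.1 id).det := by
    rw [← Finset.sum_subtype (Finset.univ.filter Function.Injective) (by simp)
      (fun f => (∏ i, A i (f i)) * (B.submatrix f id).det)]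
    rw [Finset.sum_filter_of_ne]
    intro f _ hne
    by_contra hinj
    apply hne
    simp only [Function.Injective, not_forall] at hinj
    obtain ⟨i, j, hij, hne'⟩ := hinj
    have : (B.submatrix f id).det = 0 :=
      Matrix.det_zero_of_row_eq hne' (by ext k; simp [hij])
    rw [this, mul_zero]
  rw [h2]
  -- step 3: reindex injective maps by (strictly monotone, permutation) pairs
  have e : ∀ p : {σ : Fin r → Fin m // StrictMono σ} × Equiv.Perm (Fin r),
      Function.Injective (p.1.1 ∘ p.2) := fun p =>
    p.1.2.injective.comp p.2.injective
  have hbij : Function.Bijective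
      (fun p : {σ : Fin r → Fin m // StrictMono σ} × Equiv.Perm (Fin r) =>
        (⟨p.1.1 ∘ p.2, e p⟩ : {f : Fin r → Fin m // Function.Injective f})) := by
    constructor
    · rintro ⟨⟨σ, hσ⟩, π⟩ ⟨⟨σ', hσ'⟩, π'⟩ h
      simp only [Subtype.mk_eq_mk] at h
      have hr : Set.range σ = Set.range σ' := by
        have h2 := congrArg Set.range h
        rwa [Set.range_comp, Set.range_comp, π.surjective.range_eq, π'.surjective.range_eq,
          Set.image_univ, Set.image_univ] at h2
      haveI : WellFoundedLT (Fin r) := inferInstance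
      have hσσ' : σ = σ' := (hσ.range_inj hσ').mp hr
      subst hσσ'
      have : π = π' := Equiv.ext fun i => hσ.injective (congrFun h i)
      simp [this]
    · rintro ⟨f, hf⟩
      have hs : (Finset.image f Finset.univ).card = r := by
        rw [Finset.card_image_of_injective _ hf, Finset.card_univ, Fintype.card_fin]
      set s := Finset.image f Finset.univ with hs_def
      have hmem : ∀ i, f i ∈ s := fun i => Finset.mem_image_of_mem _ (Finset.mem_univ i)
      let g : Fin r → Fin r := fun i => (s.orderIsoOfFin hs).symm ⟨f i, hmem i⟩
      have hkey : ∀ i, s.orderEmbOfFin hs (g i) = f i := by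
        intro i
        rw [← Finset.coe_orderIsoOfFin_apply]
        simp [g]
      have hg : Function.Injective g := by
        intro i j hij
        apply hf
        rw [← hkey i, ← hkey j, hij]
      let π : Equiv.Perm (Fin r) := Equiv.ofBijective g (Finite.injective_iff_bijective.mp hg)
      refine ⟨⟨⟨fun i => s.orderEmbOfFin hs i, (s.orderEmbOfFin hs).strictMono⟩, π⟩, ?_⟩
      apply Subtype.ext
      funext i
      exact hkey i
  rw [← Fintype.sum_bijective _ hbij _
    (fun f => (∏ i, A i (f.1 i)) * (B.submatrix f.1 id).det) (fun p => rfl)]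
  rw [Fintype.sum_prod_type]
  dsimp only
  refine Finset.sum_congr rfl fun σ _ => ?_
  -- step 4: per σ, sum over permutations gives det of the A-minor
  have hdetA : (A.submatrix id σ.1).det
      = ∑ π : Equiv.Perm (Fin r), (Equiv.Perm.sign π : ℝ) * ∏ i, A i (σ.1 (π i)) := by
    rw [← Matrix.det_transpose, Matrix.det_apply']
    refine Finset.sum_congr rfl fun π _ => ?_
    simp [Matrix.transpose_apply, Matrix.submatrix_apply]
  rw [hdetA, Finset.sum_mul]
  refine Finset.sum_congr rfl fun π _ => ?_
  have : B.submatrix (σ.1 ∘ π) id = (B.submatrix σ.1 id).submatrix π id := by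
    ext i j; simp
  rw [this, Matrix.det_permute]
  simp only [Function.comp_apply]
  ring

theorem gram_det_eq {r m : ℕ} (A : Matrix (Fin r) (Fin m) ℝ) :
    (A * A.transpose).det = ∑ σ : {σ : Fin r → Fin m // StrictMono σ},
      (A.submatrix id σ.1).det ^ 2 := by
  rw [cauchy_binet]
  refine Finset.sum_congr rfl fun σ _ => ?_
  have : A.transpose.submatrix σ.1 id = (A.submatrix id σ.1).transpose := by
    ext i j; simp
  rw [this, Matrix.det_transpose, sq]

end CBaux

/-- There is a strictly monotone choice of `r` columns of `A` whose minor squared is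
at least `det (A * Aᵀ) / (m.choose r)`; in particular any minor `J₁` of maximal absolute
value among strictly monotone column selections satisfies
`|det J₁|² ≥ (m.choose r)⁻¹ * det (A * Aᵀ)`. -/
theorem exists_minor_sq_ge_gram_det_div_choose (r m : ℕ) (hrm : r ≤ m)
    (A : Matrix (Fin r) (Fin m) ℝ) :
    (∃ σ : Fin r → Fin m, StrictMono σ ∧
        (A.submatrix id σ).det ^ 2 ≥ (A * A.transpose).det / (m.choose r : ℝ)) ∧
    ∀ σ₁ : Fin r → Fin m, StrictMono σ₁ →
      (∀ σ : Fin r → Fin m, StrictMono σ →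
        |(A.submatrix id σ).det| ≤ |(A.submatrix id σ₁).det|) →
      |(A.submatrix id σ₁).det| ^ 2 ≥ ((m.choose r : ℝ))⁻¹ * (A * A.transpose).det := by
  classical
  have hcard : Fintype.card {σ : Fin r → Fin m // StrictMono σ} = m.choose r :=
    CBaux.card_mono r m
  have hsum := CBaux.gram_det_eq A
  have hpos : (0:ℝ) < (m.choose r : ℝ) := by exact_mod_cast Nat.choose_pos hrm
  have hne : Nonempty {σ : Fin r → Fin m // StrictMono σ} :=
    ⟨⟨Fin.castLE hrm, fun a b hab => hab⟩⟩
  constructor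
  · have h := Finset.exists_le_of_sum_le (s := (Finset.univ : Finset {σ : Fin r → Fin m // StrictMono σ}))
      (f := fun _ => (A * A.transpose).det / (m.choose r : ℝ))
      (g := fun σ => (A.submatrix id σ.1).det ^ 2)
      Finset.univ_nonempty (by
        rw [← hsum, Finset.sum_const, Finset.card_univ, hcard, nsmul_eq_mul,
          mul_div_cancel₀ _ (ne_of_gt hpos)])
    obtain ⟨σ, -, hσ⟩ := h
    exact ⟨σ.1, σ.2, hσ⟩
  · intro σ₁ hσ₁ hmax
    have hle : (A * A.transpose).det ≤ (m.choose r : ℝ) * |(A.submatrix id σ₁).det| ^ 2 := by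
      rw [hsum]
      calc ∑ σ : {σ : Fin r → Fin m // StrictMono σ}, (A.submatrix id σ.1).det ^ 2
          ≤ ∑ _σ : {σ : Fin r → Fin m // StrictMono σ}, |(A.submatrix id σ₁).det| ^ 2 := by
            refine Finset.sum_le_sum fun σ _ => ?_
            rw [← sq_abs]
            exact pow_le_pow_left₀ (abs_nonneg _) (hmax σ.1 σ.2) 2
        _ = (m.choose r : ℝ) * |(A.submatrix id σ₁).det| ^ 2 := by
            rw [Finset.sum_const, Finset.card_univ, hcard, nsmul_eq_mul]
    rw [ge_iff_le, inv_mul_le_iff₀ hpos]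
    exact hle
end

section
/- Let A be a real r × m matrix with det(A · Aᵀ) > 0. Then the Lebesgue measure of the ellipsoid {u ∈ ℝʳ : ‖Aᵀ · u‖ ≤ 1} (where ‖·‖ is the Euclidean norm on ℝᵐ and Aᵀ · u is the matrix–vector product) equals c₀⁻¹ · det(A · Aᵀ)^{-1/2}, where c₀ = Γ(1 + r/2) / π^{r/2}; equivalently, it equals the volume of the Euclidean unit ball in ℝʳ divided by √det(A · Aᵀ). -/
open MeasureTheory

/-- The Lebesgue volume of the ellipsoid `{u ∈ ℝʳ : ‖Aᵀ u‖ ≤ 1}` equals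
`c₀⁻¹ · (det (A Aᵀ))^{-1/2}` where `c₀ = Γ(1 + r/2) / π^{r/2}` is the reciprocal of the
volume of the Euclidean unit ball in `ℝʳ`. -/
theorem volume_ellipsoid (r m : ℕ) (A : Matrix (Fin r) (Fin m) ℝ)
    (hA : 0 < (A * A.transpose).det) :
    volume {u : EuclideanSpace ℝ (Fin r) |
        ‖(EuclideanSpace.equiv (Fin m) ℝ).symm (A.transpose.mulVec ((EuclideanSpace.equiv (Fin r) ℝ) u))‖ ≤ 1}
      = ENNReal.ofReal
          ((Real.Gamma (1 + (r : ℝ) / 2) / Real.pi ^ ((r : ℝ) / 2))⁻¹ *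
            ((A * A.transpose).det) ^ (-(1 : ℝ) / 2)) := by
  open Matrix in
  rcases Nat.eq_zero_or_pos r with hr | hr
  · subst hr
    have h1 : {u : EuclideanSpace ℝ (Fin 0) |
        ‖(EuclideanSpace.equiv (Fin m) ℝ).symm (A.transpose.mulVec ((EuclideanSpace.equiv (Fin 0) ℝ) u))‖ ≤ 1}
        = Set.univ := by
      ext u
      simp only [Set.mem_setOf_eq, Set.mem_univ, iff_true]
      have : A.transpose.mulVec ((EuclideanSpace.equiv (Fin 0) ℝ) u) = 0 := by
        ext i; simp [Matrix.mulVec, dotProduct]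
      rw [this]
      simp
    rw [h1]
    have h2 : (volume : Measure (EuclideanSpace ℝ (Fin 0))) Set.univ = 1 := by
      have h3 := (EuclideanSpace.volume_preserving_symm_measurableEquiv_toLp (Fin 0)).measure_preimage
        MeasurableSet.univ.nullMeasurableSet
      simp only [Set.preimage_univ] at h3
      rw [h3]
      rw [MeasureTheory.volume_pi, Measure.pi_univ]
      simp
    rw [h2]
    rw [show (A * A.transpose).det = 1 from Matrix.det_isEmpty]
    norm_num [Real.Gamma_one]
  haveI : Nonempty (Fin r) := ⟨⟨0, hr⟩⟩
  set S := A * A.transpose with hSdef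
  have hS : S.PosSemidef := by
    have := Matrix.posSemidef_self_mul_conjTranspose A
    rwa [Matrix.conjTranspose_eq_transpose_of_trivial] at this
  set M := (open scoped MatrixOrder in CFC.sqrt S) with hMdef
  have hMM : M * M = S := by open scoped MatrixOrder in exact CFC.sqrt_mul_sqrt_self S hS.nonneg
  have hMpsd : M.PosSemidef := by open scoped MatrixOrder in exact (CFC.sqrt_nonneg S).posSemidef
  have hMsymm : M.transpose = M := by
    have := hMpsd.isHermitian
    rwa [Matrix.IsHermitian, Matrix.conjTranspose_eq_transpose_of_trivial] at this
  have hdetM : M.det ^ 2 = S.det := by rw [sq, ← Matrix.det_mul, hMM]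
  have hdetMnn : 0 ≤ M.det := by
    rw [hMpsd.1.det_eq_prod_eigenvalues]
    exact Finset.prod_nonneg fun i _ => by exact_mod_cast hMpsd.eigenvalues_nonneg i
  have hdetMpos : 0 < M.det := by
    rcases hdetMnn.lt_or_eq with h | h
    · exact h
    · exfalso; rw [← hdetM, ← h] at hA; simp at hA
  have hsqrtdet : M.det = Real.sqrt S.det := by
    rw [← hdetM, Real.sqrt_sq hdetMnn]
  -- general quadratic form lemma
  have key : ∀ {k : ℕ} (B : Matrix (Fin r) (Fin k) ℝ) (v : Fin r → ℝ),
      (B.transpose.mulVec v) ⬝ᵥ (B.transpose.mulVec v) = v ⬝ᵥ ((B * B.transpose).mulVec v) := by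
    intro k B v
    rw [Matrix.dotProduct_mulVec, Matrix.vecMul_transpose, Matrix.mulVec_mulVec,
      dotProduct_comm]
  have hset : {u : EuclideanSpace ℝ (Fin r) |
        ‖(EuclideanSpace.equiv (Fin m) ℝ).symm (A.transpose.mulVec ((EuclideanSpace.equiv (Fin r) ℝ) u))‖ ≤ 1}
      = (Matrix.toEuclideanLin M) ⁻¹' Metric.closedBall 0 1 := by
    ext u
    simp only [Set.mem_setOf_eq, Set.mem_preimage, Metric.mem_closedBall, dist_zero_right]
    have h1 : ∀ (k : ℕ) (w : Fin k → ℝ),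
        ‖(WithLp.equiv 2 (Fin k → ℝ)).symm w‖ ^ 2 = w ⬝ᵥ w := by
      intro k w
      rw [EuclideanSpace.norm_eq, Real.sq_sqrt (by positivity)]
      simp [dotProduct, sq_abs, sq]
    have e1 : ‖(EuclideanSpace.equiv (Fin m) ℝ).symm (A.transpose.mulVec ((EuclideanSpace.equiv (Fin r) ℝ) u))‖
        = ‖Matrix.toEuclideanLin M u‖ := by
      have e2 : ‖(EuclideanSpace.equiv (Fin m) ℝ).symm (A.transpose.mulVec ((EuclideanSpace.equiv (Fin r) ℝ) u))‖ ^ 2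
          = ‖Matrix.toEuclideanLin M u‖ ^ 2 := by
        have h2 : Matrix.toEuclideanLin M u
            = (WithLp.equiv 2 (Fin r → ℝ)).symm (M.mulVec ((WithLp.equiv 2 (Fin r → ℝ)) u)) := rfl
        have h3 : ‖(EuclideanSpace.equiv (Fin m) ℝ).symm (A.transpose.mulVec ((EuclideanSpace.equiv (Fin r) ℝ) u))‖
            = ‖(WithLp.equiv 2 (Fin m → ℝ)).symm (A.transpose.mulVec ((WithLp.equiv 2 (Fin r → ℝ)) u))‖ := rfl
        rw [h2, h3, h1, h1]
        set v := (WithLp.equiv 2 (Fin r → ℝ)) u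
        have hM' : M.mulVec v = M.transpose.mulVec v := by rw [hMsymm]
        rw [hM', key A v, key M v]
        rw [hMsymm, hMM]
      have := congrArg Real.sqrt e2
      rwa [Real.sqrt_sq (norm_nonneg _), Real.sqrt_sq (norm_nonneg _)] at this
    rw [e1]
  rw [hset]
  -- determinant of the linear map
  have hdetLin : LinearMap.det (Matrix.toEuclideanLin M : EuclideanSpace ℝ (Fin r) →ₗ[ℝ] EuclideanSpace ℝ (Fin r)) = M.det := by
    have : (Matrix.toEuclideanLin M : EuclideanSpace ℝ (Fin r) →ₗ[ℝ] EuclideanSpace ℝ (Fin r))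
        = ((WithLp.linearEquiv 2 ℝ (Fin r → ℝ)).symm : (Fin r → ℝ) →ₗ[ℝ] EuclideanSpace ℝ (Fin r))
          ∘ₗ Matrix.toLin' M
          ∘ₗ ((WithLp.linearEquiv 2 ℝ (Fin r → ℝ)) : EuclideanSpace ℝ (Fin r) →ₗ[ℝ] (Fin r → ℝ)) := rfl
    rw [this]
    rw [show ((WithLp.linearEquiv 2 ℝ (Fin r → ℝ)) : EuclideanSpace ℝ (Fin r) →ₗ[ℝ] (Fin r → ℝ))
        = (((WithLp.linearEquiv 2 ℝ (Fin r → ℝ)).symm).symm : EuclideanSpace ℝ (Fin r) →ₗ[ℝ] (Fin r → ℝ)) from rfl]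
    rw [LinearMap.det_conj (Matrix.toLin' M) (WithLp.linearEquiv 2 ℝ (Fin r → ℝ)).symm]
    exact LinearMap.det_toLin' M
  rw [Measure.addHaar_preimage_linearMap volume (by rw [hdetLin]; exact hdetMpos.ne')]
  rw [hdetLin, EuclideanSpace.volume_closedBall]
  rw [abs_of_pos (inv_pos.2 hdetMpos)]
  simp only [ENNReal.ofReal_one, one_pow, one_mul, Fintype.card_fin]
  rw [← ENNReal.ofReal_mul (by positivity)]
  congr 1
  have hpi : Real.sqrt Real.pi ^ r = Real.pi ^ ((r : ℝ) / 2) := by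
    rw [Real.sqrt_eq_rpow, ← Real.rpow_natCast (Real.pi ^ ((1:ℝ)/2)) r, ← Real.rpow_mul Real.pi_pos.le]
    ring_nf
  have hg : Real.Gamma ((r : ℝ) / 2 + 1) = Real.Gamma (1 + (r : ℝ) / 2) := by rw [add_comm]
  have hdet' : S.det ^ (-(1:ℝ) / 2) = (Real.sqrt S.det)⁻¹ := by
    rw [show (-(1:ℝ)) / 2 = -(1/2) by norm_num, Real.rpow_neg hA.le, ← Real.sqrt_eq_rpow]
  rw [hpi, hg, hsqrtdet, hdet']
  have hΓpos : 0 < Real.Gamma (1 + (r : ℝ) / 2) := Real.Gamma_pos_of_pos (by positivity)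
  have hπpos : 0 < Real.pi ^ ((r : ℝ) / 2) := Real.rpow_pos_of_pos Real.pi_pos _
  field_simp
end

section
/- (Second mean value estimate for oscillatory integrals of monotone functions.) Let a ≤ b be real numbers and let g : ℝ → ℝ be monotone (nondecreasing) on the interval [a, b]. Then the complex-valued integral satisfies |∫ₐᵇ g(u) e^{2πiu} du| ≤ (2/π) · (|g(a)| + |g(b)|). -/
open scoped Real
open MeasureTheory Set

lemma keyA (c d : ℝ) : ‖∫ u in c..d, Complex.exp (2 * π * Complex.I * u)‖ ≤ 1 / π := by
  have hπ : (0:ℝ) < π := Real.pi_pos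
  have hc : (2 * (π:ℂ) * Complex.I) ≠ 0 := by
    refine mul_ne_zero (mul_ne_zero two_ne_zero ?_) Complex.I_ne_zero
    exact_mod_cast Real.pi_ne_zero
  rw [integral_exp_mul_complex hc]
  have habs : ∀ x : ℝ, ‖Complex.exp (2 * (π:ℂ) * Complex.I * x)‖ = 1 := by
    intro x
    rw [Complex.norm_exp]
    have : (2 * (π:ℂ) * Complex.I * x).re = 0 := by simp
    simp [this]
  have hden : ‖(2 * (π:ℂ) * Complex.I)‖ = 2 * π := by
    simp [abs_of_pos hπ]
  rw [norm_div, hden]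
  have hnum : ‖Complex.exp (2 * (π:ℂ) * Complex.I * d) - Complex.exp (2 * (π:ℂ) * Complex.I * c)‖ ≤ 2 := by
    calc _ ≤ ‖Complex.exp (2 * (π:ℂ) * Complex.I * d)‖ + ‖Complex.exp (2 * (π:ℂ) * Complex.I * c)‖ := by
          exact norm_sub_le _ _
    _ ≤ 2 := by rw [habs, habs]; norm_num
  calc _ ≤ 2 / (2 * π) := by gcongr <;> positivity
  _ = 1 / π := by field_simp

lemma bonnet {a b : ℝ} (hab : a ≤ b) {h : ℝ → ℝ} (hm : Monotone h) (ha : h a = 0) :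
    ‖∫ u in a..b, (h u : ℂ) * Complex.exp (2 * π * Complex.I * u)‖ ≤ h b / π := by
  have hπ : (0:ℝ) < π := Real.pi_pos
  set e : ℝ → ℂ := fun u => Complex.exp (2 * π * Complex.I * u) with he
  set M : ℝ := h b with hM
  have hM0 : 0 ≤ M := ha ▸ hm hab
  set A : Set (ℝ × ℝ) := {p : ℝ × ℝ | p.2 < h p.1} with hA
  have hAm : MeasurableSet A := measurableSet_lt measurable_snd (hm.measurable.comp measurable_fst)
  set f : ℝ → ℝ → ℂ := fun u t => A.indicator (fun p => e p.1) (u, t) with hf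
  have he_cont : Continuous e := by
    apply Complex.continuous_exp.comp
    exact (continuous_const.mul Complex.continuous_ofReal)
  have habs1 : ∀ x : ℝ, ‖e x‖ = 1 := by
    intro x
    rw [he, Complex.norm_exp]
    have : (2 * (π:ℂ) * Complex.I * x).re = 0 := by simp
    simp [this]
  -- instances
  haveI i1 : IsFiniteMeasure (volume.restrict (Set.Ioc a b)) :=
    ⟨by rw [Measure.restrict_apply_univ]; exact measure_Ioc_lt_top⟩
  haveI i2 : IsFiniteMeasure (volume.restrict (Set.Ioo 0 M)) :=
    ⟨by rw [Measure.restrict_apply_univ]; exact measure_Ioo_lt_top⟩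
  -- integrability of the uncurried function
  have hint : Integrable (Function.uncurry f)
      ((volume.restrict (Set.Ioc a b)).prod (volume.restrict (Set.Ioo 0 M))) := by
    have huncurry : Function.uncurry f = A.indicator (fun p => e p.1) := by
      funext p; simp [Function.uncurry, hf]
    rw [huncurry]
    have hmeas : AEStronglyMeasurable (A.indicator (fun p : ℝ × ℝ => e p.1))
        ((volume.restrict (Set.Ioc a b)).prod (volume.restrict (Set.Ioo 0 M))) :=
      ((he_cont.comp continuous_fst).aestronglyMeasurable).indicator hAm
    refine (integrable_const (1:ℝ)).mono' hmeas ?_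
    filter_upwards with p
    calc ‖A.indicator (fun p : ℝ × ℝ => e p.1) p‖ ≤ ‖e p.1‖ := norm_indicator_le_norm_self _ _
    _ = 1 := habs1 _
  -- layer-cake representation of the integrand
  have hrep : ∀ u ∈ Set.Ioc a b, (h u : ℂ) * e u = ∫ t in Set.Ioo 0 M, f u t := by
    intro u hu
    have hu0 : 0 ≤ h u := ha ▸ hm hu.1.le
    have huM : h u ≤ M := hm hu.2
    have hfeq : ∀ t, f u t = (Set.Iio (h u)).indicator (fun _ => e u) t := by
      intro t
      by_cases h' : t < h u <;> simp [hf, hA, Set.indicator, h']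
    simp_rw [hfeq]
    rw [setIntegral_indicator measurableSet_Iio, setIntegral_const]
    have hset : Set.Ioo 0 M ∩ Set.Iio (h u) = Set.Ioo 0 (h u) := by
      ext t
      simp only [Set.mem_inter_iff, Set.mem_Ioo, Set.mem_Iio]
      exact ⟨fun ⟨⟨h1, _⟩, h3⟩ => ⟨h1, h3⟩, fun ⟨h1, h3⟩ => ⟨⟨h1, lt_of_lt_of_le h3 huM⟩, h3⟩⟩
    rw [hset, Real.volume_real_Ioo_of_le hu0, sub_zero, Complex.real_smul]
  rw [intervalIntegral.integral_of_le hab,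
    setIntegral_congr_fun measurableSet_Ioc hrep,
    integral_integral_swap hint]
  -- bound the outer integral
  have key : ∀ t ∈ Set.Ioo 0 M, ‖∫ u in Set.Ioc a b, f u t‖ ≤ 1 / π := by
    intro t ht
    set S : Set ℝ := {u : ℝ | t < h u} with hS
    have hSm : MeasurableSet S := hm.measurable measurableSet_Ioi
    have hfeq2 : ∀ u, f u t = S.indicator e u := by
      intro u
      by_cases h' : t < h u <;> simp [hf, hA, hS, Set.indicator, h']
    simp_rw [hfeq2]
    rw [setIntegral_indicator hSm]
    have hbS : b ∈ S := ht.2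
    have hlow : ∀ u ∈ S, a ≤ u := by
      intro u hu
      by_contra hcon
      push_neg at hcon
      have : h u ≤ 0 := ha ▸ hm hcon.le
      exact absurd (lt_of_lt_of_le (lt_trans ht.1 hu) this) (lt_irrefl 0)
    have hne : S.Nonempty := ⟨b, hbS⟩
    have hbdd : BddBelow S := ⟨a, hlow⟩
    set c := sInf S with hc
    have hac : a ≤ c := le_csInf hne hlow
    have hcb : c ≤ b := csInf_le hbdd hbS
    have hsub1 : Set.Ioc c b ⊆ Set.Ioc a b ∩ S := by
      intro u hu
      obtain ⟨s, hs, hsu⟩ := exists_lt_of_csInf_lt hne hu.1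
      exact ⟨⟨lt_of_le_of_lt hac hu.1, hu.2⟩, lt_of_lt_of_le hs (hm hsu.le)⟩
    have hsub2 : Set.Ioc a b ∩ S ⊆ Set.Icc c b := fun u hu => ⟨csInf_le hbdd hu.2, hu.1.2⟩
    have hae : (Set.Ioc a b ∩ S : Set ℝ) =ᵐ[volume] (Set.Ioc c b : Set ℝ) := by
      rw [MeasureTheory.ae_eq_set]
      constructor
      · refine measure_mono_null (t := ({c} : Set ℝ)) (fun u hu => ?_) (Real.volume_singleton)
        have h1 := hsub2 hu.1
        have h2 : ¬ (c < u ∧ u ≤ b) := hu.2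
        have : u = c := le_antisymm (by by_contra hcc; exact h2 ⟨lt_of_not_ge hcc, h1.2⟩) h1.1
        simp [this]
      · rw [Set.diff_eq_empty.mpr hsub1]; exact measure_empty
    rw [setIntegral_congr_set hae, ← intervalIntegral.integral_of_le hcb]
    exact keyA c b
  have hmeas2 : AEStronglyMeasurable (fun t => ∫ u in Set.Ioc a b, f u t)
      (volume.restrict (Set.Ioo 0 M)) := by
    have := hint.swap.integral_prod_left
    exact this.aestronglyMeasurable
  calc ‖∫ t in Set.Ioo 0 M, ∫ u in Set.Ioc a b, f u t‖
      ≤ (1 / π) * (volume (Set.Ioo 0 M)).toReal :=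
        norm_setIntegral_le_of_norm_le_const measure_Ioo_lt_top key
  _ = M / π := by rw [Real.volume_Ioo, sub_zero, ENNReal.toReal_ofReal hM0]; ring

/-- Second mean value estimate for oscillatory integrals: if `g` is monotone (nondecreasing)
on `[a, b]`, then `|∫ₐᵇ g(u) e^{2πiu} du| ≤ (2/π)(|g a| + |g b|)`. -/
theorem abs_integral_monotone_mul_exp_le (a b : ℝ) (hab : a ≤ b) (g : ℝ → ℝ)
    (hg : MonotoneOn g (Set.Icc a b)) :
    ‖∫ u in a..b, (g u : ℂ) * Complex.exp (2 * π * Complex.I * u)‖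
      ≤ 2 / π * (|g a| + |g b|) := by
  have hπ : (0:ℝ) < π := Real.pi_pos
  set e : ℝ → ℂ := fun u => Complex.exp (2 * π * Complex.I * u) with he
  set gc : ℝ → ℝ := fun u => g (max a (min u b)) with hgc
  have hmem : ∀ u, max a (min u b) ∈ Set.Icc a b :=
    fun u => ⟨le_max_left _ _, max_le hab (min_le_right u b)⟩
  have hgcm : Monotone gc := by
    intro u v huv
    exact hg (hmem u) (hmem v) (max_le_max le_rfl (min_le_min_right b huv))
  have hgca : gc a = g a := by
    simp [hgc, min_eq_left hab]
  have hgcb : gc b = g b := by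
    simp [hgc, min_self, max_eq_right hab]
  -- replace g by gc inside the integral
  have heqOn : Set.EqOn (fun u => (g u : ℂ) * e u) (fun u => (gc u : ℂ) * e u) (Set.uIcc a b) := by
    intro u hu
    rw [Set.uIcc_of_le hab] at hu
    simp only [hgc, min_eq_left hu.2, max_eq_right hu.1]
  rw [intervalIntegral.integral_congr heqOn]
  set h : ℝ → ℝ := fun u => gc u - gc a with hh
  have hhm : Monotone h := fun u v huv => sub_le_sub_right (hgcm huv) _
  have hha : h a = 0 := sub_self _
  have hint1 : IntervalIntegrable (fun u => (h u : ℂ)) volume a b := by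
    have : IntervalIntegrable h volume a b :=
      (hhm.monotoneOn _).intervalIntegrable
    exact ⟨this.1.ofReal, this.2.ofReal⟩
  have hecont : Continuous e := by
    apply Complex.continuous_exp.comp
    exact continuous_const.mul Complex.continuous_ofReal
  have hint1' : IntervalIntegrable (fun u => (h u : ℂ) * e u) volume a b :=
    hint1.mul_continuousOn hecont.continuousOn
  have hint2 : IntervalIntegrable (fun u => (g a : ℂ) * e u) volume a b :=
    ((continuous_const.mul hecont).intervalIntegrable a b)
  have hsplit : (fun u => (gc u : ℂ) * e u)
      = fun u => (h u : ℂ) * e u + (g a : ℂ) * e u := by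
    funext u
    have : (gc u : ℂ) = (h u : ℂ) + (g a : ℂ) := by
      rw [hh]; push_cast [hgca]; ring
    rw [this]; ring
  rw [hsplit, intervalIntegral.integral_add hint1' hint2]
  have hb1 : ‖∫ u in a..b, (h u : ℂ) * e u‖ ≤ (g b - g a) / π := by
    have := bonnet hab hhm hha
    simpa [hh, hgca, hgcb] using this
  have hb2 : ‖∫ u in a..b, (g a : ℂ) * e u‖ ≤ |g a| * (1 / π) := by
    rw [intervalIntegral.integral_const_mul, norm_mul, Complex.norm_real,
      Real.norm_eq_abs]
    exact mul_le_mul_of_nonneg_left (keyA a b) (abs_nonneg _)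
  calc ‖(∫ u in a..b, (h u : ℂ) * e u) + ∫ u in a..b, (g a : ℂ) * e u‖
      ≤ ‖∫ u in a..b, (h u : ℂ) * e u‖ + ‖∫ u in a..b, (g a : ℂ) * e u‖ := norm_add_le _ _
    _ ≤ (g b - g a) / π + |g a| * (1 / π) := add_le_add hb1 hb2
    _ ≤ 2 / π * (|g a| + |g b|) := by
        have h1 : g b - g a ≤ |g b| + |g a| := by
          have := abs_le.mp (le_refl |g a|)
          have hga := neg_abs_le (g a)
          have hgb := le_abs_self (g b)
          linarith
        rw [div_eq_mul_inv, div_eq_mul_inv, div_eq_mul_inv, one_mul]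
        have hπinv : (0:ℝ) < π⁻¹ := inv_pos.mpr hπ
        nlinarith [abs_nonneg (g a), abs_nonneg (g b)]
end

section
/- Let B be a real m × n matrix, let r ≤ n, and let μ₁ ≤ μ₂ ≤ … ≤ μₙ be the eigenvalues (with multiplicity, in nondecreasing order) of the symmetric positive semidefinite matrix Bᵀ·B. Then for every orthonormal family of vectors u₁, …, u_r in EuclideanSpace ℝ (Fin n), the determinant of the r × r Gram matrix G with entries Gᵢⱼ = ⟨B·uᵢ, B·uⱼ⟩ satisfies det G ≥ μ₁ · μ₂ ⋯ μ_r, the product of the r smallest eigenvalues of BᵀB. -/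
open Finset Equiv Equiv.Perm Matrix


variable {r n : ℕ}

local notation "ε" σ => ((Equiv.Perm.sign σ : ℤ) : ℝ)

/-- index set: strictly monotone maps `Fin r → Fin n` -/
noncomputable def monoFuns (r n : ℕ) : Finset (Fin r → Fin n) :=
  @Finset.filter _ StrictMono (Classical.decPred _) Finset.univ

theorem cb_aux (M : Matrix (Fin r) (Fin n) ℝ) (N : Matrix (Fin n) (Fin r) ℝ)
    {p : Fin r → Fin n} (H : ¬Function.Injective p) :
    (∑ σ : Perm (Fin r), (ε σ) * ∏ x, M (σ x) (p x) * N (p x) x) = 0 := by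
  obtain ⟨i, j, hpij, hij⟩ : ∃ i j, p i = p j ∧ i ≠ j := by
    rw [Function.Injective] at H
    push_neg at H
    exact H
  exact
    sum_involution (fun σ _ => σ * Equiv.swap i j)
      (fun σ _ => by
        have : (∏ x, M (σ x) (p x)) = ∏ x, M ((σ * Equiv.swap i j) x) (p x) :=
          Fintype.prod_equiv (swap i j) _ _ (by simp [apply_swap_eq_self hpij])
        simp [this, sign_swap hij, -sign_swap', prod_mul_distrib])
      (fun σ _ _ => (not_congr mul_swap_eq_iff).mpr hij) (fun _ _ => mem_univ _) fun σ _ =>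
      mul_swap_involutive i j σ

theorem cb_expand (M : Matrix (Fin r) (Fin n) ℝ) (N : Matrix (Fin n) (Fin r) ℝ) :
    det (M * N) = ∑ p : Fin r → Fin n, ∑ σ : Perm (Fin r),
      (ε σ) * ∏ i, M (σ i) (p i) * N (p i) i := by
  simp only [det_apply', Matrix.mul_apply, prod_univ_sum, mul_sum, Fintype.piFinset_univ]
  rw [Finset.sum_comm]

theorem cb_group (M : Matrix (Fin r) (Fin n) ℝ) (N : Matrix (Fin n) (Fin r) ℝ)
    (f : Fin r → Fin n) :
    (∑ τ : Perm (Fin r), ∑ σ : Perm (Fin r),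
        (ε σ) * ∏ i, M (σ i) (f (τ i)) * N (f (τ i)) i)
      = det (M.submatrix id f) * det (N.submatrix f id) := by
  calc
    (∑ τ : Perm (Fin r), ∑ σ : Perm (Fin r),
        (ε σ) * ∏ i, M (σ i) (f (τ i)) * N (f (τ i)) i)
        = ∑ σ : Perm (Fin r), ∑ τ : Perm (Fin r),
            (∏ i, N (f (σ i)) i) * (ε τ) * ∏ j, M (τ j) (f (σ j)) := by
      simp only [mul_comm, mul_left_comm, prod_mul_distrib, mul_assoc]
    _ = ∑ σ : Perm (Fin r), ∑ τ : Perm (Fin r),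
            (∏ i, N (f (σ i)) i) * ((ε σ) * (ε τ)) * ∏ i, M (τ i) (f i) :=
      (sum_congr rfl fun σ _ =>
        Fintype.sum_equiv (Equiv.mulRight σ⁻¹) _ _ fun τ => by
          have : (∏ j, M (τ j) (f (σ j))) = ∏ j, M ((τ * σ⁻¹) j) (f j) := by
            rw [← (σ⁻¹ : _ ≃ _).prod_comp]
            simp only [Equiv.Perm.coe_mul, Equiv.Perm.coe_inv, Equiv.apply_symm_apply, Function.comp_apply]
          have h : (ε σ) * (ε (τ * σ⁻¹)) = ε τ :=
            calc
              (ε σ) * (ε (τ * σ⁻¹)) = ε (τ * σ⁻¹ * σ) := by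
                rw [mul_comm, sign_mul (τ * σ⁻¹)]
                simp only [Int.cast_mul, Units.val_mul]
              _ = ε τ := by simp only [inv_mul_cancel_right]
          simp_rw [Equiv.coe_mulRight, h]
          simp only [this])
    _ = det (M.submatrix id f) * det (N.submatrix f id) := by
      simp only [det_apply', submatrix_apply, id_eq, Finset.mul_sum, Finset.sum_mul]
      refine Finset.sum_congr rfl fun σ _ => Finset.sum_congr rfl fun τ _ => by ring

theorem cauchy_binet (M : Matrix (Fin r) (Fin n) ℝ) (N : Matrix (Fin n) (Fin r) ℝ) :
    det (M * N) = ∑ f ∈ monoFuns r n,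
      det (M.submatrix id f) * det (N.submatrix f id) := by
  classical
  rw [cb_expand M N]
  have h2 : (∑ p : Fin r → Fin n, ∑ σ : Perm (Fin r),
        (ε σ) * ∏ i, M (σ i) (p i) * N (p i) i)
      = ∑ p ∈ Finset.univ.filter (fun p : Fin r → Fin n => Function.Injective p),
          ∑ σ : Perm (Fin r), (ε σ) * ∏ i, M (σ i) (p i) * N (p i) i := by
    refine (sum_subset (filter_subset _ _) fun p _ hp => cb_aux M N ?_).symm
    simpa using hp
  rw [h2]
  have h3 : (∑ p ∈ Finset.univ.filter (fun p : Fin r → Fin n => Function.Injective p),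
        ∑ σ : Perm (Fin r), (ε σ) * ∏ i, M (σ i) (p i) * N (p i) i)
      = ∑ x ∈ (monoFuns r n) ×ˢ (Finset.univ : Finset (Perm (Fin r))),
          ∑ σ : Perm (Fin r), (ε σ) * ∏ i, M (σ i) ((x.1 ∘ x.2) i) * N ((x.1 ∘ x.2) i) i := by
    refine (Finset.sum_bij (fun x _ => x.1 ∘ x.2) ?_ ?_ ?_ ?_).symm
    · rintro ⟨f, τ⟩ hx
      simp only [monoFuns, Finset.mem_product, Finset.mem_filter] at hx
      simp only [Finset.mem_filter, Finset.mem_univ, true_and]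
      exact hx.1.2.injective.comp τ.injective
    · rintro ⟨f, τ⟩ hx ⟨f', τ'⟩ hx' h
      simp only [monoFuns, Finset.mem_product, Finset.mem_filter] at hx hx'
      have h' : f ∘ ⇑τ = f' ∘ ⇑τ' := h
      have hrange : Set.range f = Set.range f' := by
        rw [← τ.surjective.range_comp f, ← τ'.surjective.range_comp f', h']
      haveI : WellFoundedLT (Fin r) := inferInstance
      have hf : f = f' := (hx.1.2.range_inj hx'.1.2).mp hrange
      subst hf
      have hτ : (τ : Fin r → Fin r) = τ' := by
        funext i
        exact hx.1.2.injective (congrFun h i)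
      exact Prod.ext rfl (Equiv.coe_fn_injective hτ)
    · intro p hp
      simp only [Finset.mem_filter, Finset.mem_univ, true_and] at hp
      set s : Finset (Fin n) := Finset.image p Finset.univ with hsdef
      have hs : s.card = r := by
        rw [hsdef, Finset.card_image_of_injective _ hp, card_univ, Fintype.card_fin]
      set f : Fin r → Fin n := ⇑(s.orderEmbOfFin hs) with hfdef
      have hmem : ∀ i, p i ∈ s := fun i => Finset.mem_image_of_mem p (mem_univ i)
      set τ : Fin r → Fin r := fun i => (s.orderIsoOfFin hs).symm ⟨p i, hmem i⟩ with hτdef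
      have hfτ : ∀ i, f (τ i) = p i := by
        intro i
        show ((s.orderIsoOfFin hs) ((s.orderIsoOfFin hs).symm ⟨p i, hmem i⟩) : Fin n) = p i
        rw [OrderIso.apply_symm_apply]
      have hτinj : Function.Injective τ := by
        intro a b hab
        apply hp
        rw [← hfτ a, ← hfτ b, hab]
      refine ⟨⟨f, Equiv.ofBijective τ (Finite.injective_iff_bijective.mp hτinj)⟩, ?_, ?_⟩
      · simp only [monoFuns, Finset.mem_product, Finset.mem_filter, Finset.mem_univ, true_and]
        exact ⟨(s.orderEmbOfFin hs).strictMono, trivial⟩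
      · funext i
        exact hfτ i
    · intro x hx
      rfl
  rw [h3, Finset.sum_product]
  exact Finset.sum_congr rfl fun f _ => cb_group M N f

theorem fin_strictMono_le {r n : ℕ} {g : Fin r → Fin n} (hg : StrictMono g) (j : Fin r) :
    (j : ℕ) ≤ (g j : ℕ) := by
  obtain ⟨k, hk⟩ := j
  induction k with
  | zero => simp
  | succ k ih =>
    have hk' : k < r := Nat.lt_of_succ_lt hk
    have h1 := ih hk'
    have h2 : g ⟨k, hk'⟩ < g ⟨k + 1, hk⟩ := hg (by simp [Fin.lt_def])
    rw [Fin.lt_def] at h2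
    simp only [Fin.val_mk] at h1 h2 ⊢
    omega

/-- Lower bound for Gram determinants: if `μ` lists the eigenvalues (with multiplicity,
in nondecreasing order) of the positive semidefinite matrix `Bᵀ B`, then for every
orthonormal family `u₁, …, u_r` in `ℝⁿ` the Gram determinant of `B u₁, …, B u_r`
is at least the product `μ₁ ⋯ μ_r` of the `r` smallest eigenvalues. -/
theorem gram_det_ge_prod_smallest_eigenvalues (m n r : ℕ) (hr : r ≤ n)
    (B : Matrix (Fin m) (Fin n) ℝ) (hH : (B.transpose * B).IsHermitian)
    (μ : Fin n → ℝ) (e : Fin n ≃ Fin n) (hμ : μ = hH.eigenvalues ∘ e)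
    (hmono : Monotone μ)
    (u : Fin r → EuclideanSpace ℝ (Fin n)) (hu : Orthonormal ℝ u) :
    (Matrix.of fun i j : Fin r =>
        dotProduct (B.mulVec ((EuclideanSpace.equiv (Fin n) ℝ) (u i)))
          (B.mulVec ((EuclideanSpace.equiv (Fin n) ℝ) (u j)))).det
      ≥ ∏ i : Fin r, μ (Fin.castLE hr i) := by
  classical
  set d : Fin n → ℝ := hH.eigenvalues with hd
  have hBt : B.conjTranspose = B.transpose := Matrix.ext fun i j => rfl
  have hpsd : (B.transpose * B).PosSemidef := by
    rw [← hBt]; exact Matrix.posSemidef_conjTranspose_mul_self B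
  have hd0 : ∀ i, 0 ≤ d i := fun i => hpsd.eigenvalues_nonneg i
  have hμ0 : ∀ i, 0 ≤ μ i := by intro i; rw [hμ]; exact hd0 _
  set U : Matrix (Fin n) (Fin r) ℝ := Matrix.of (fun k j => u j k) with hUdef
  set Q : Matrix (Fin n) (Fin n) ℝ := (hH.eigenvectorUnitary : Matrix (Fin n) (Fin n) ℝ)
    with hQdef
  have hstarQ : star Q = Qᵀ := Matrix.ext fun i j => rfl
  have hQQ : Q * Qᵀ = 1 := by
    rw [← hstarQ]
    exact (Matrix.mem_unitaryGroup_iff).mp hH.eigenvectorUnitary.2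
  have hQQ' : Qᵀ * Q = 1 := by
    rw [← hstarQ]
    exact (Matrix.mem_unitaryGroup_iff').mp hH.eigenvectorUnitary.2
  have hspec : B.transpose * B = Q * Matrix.diagonal d * Qᵀ := by
    have h := hH.spectral_theorem
    rw [Unitary.conjStarAlgAut_apply] at h
    change _ = Q * _ * star Q at h
    rw [hstarQ] at h
    simpa using h
  set V : Matrix (Fin n) (Fin r) ℝ := Qᵀ * U with hVdef
  have hVt : Vᵀ = Uᵀ * Q := by
    rw [hVdef, Matrix.transpose_mul, Matrix.transpose_transpose]
  -- the Gram matrix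
  have hG : (Matrix.of fun i j : Fin r =>
        dotProduct (B.mulVec ((EuclideanSpace.equiv (Fin n) ℝ) (u i)))
          (B.mulVec ((EuclideanSpace.equiv (Fin n) ℝ) (u j))))
      = Vᵀ * Matrix.diagonal d * V := by
    have h1 : (Matrix.of fun i j : Fin r =>
        dotProduct (B.mulVec ((EuclideanSpace.equiv (Fin n) ℝ) (u i)))
          (B.mulVec ((EuclideanSpace.equiv (Fin n) ℝ) (u j))))
        = (B * U)ᵀ * (B * U) := by
      ext i j
      simp [Matrix.mul_apply, Matrix.mulVec, dotProduct, hUdef, mul_comm]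
    rw [h1, hVt, hVdef, Matrix.transpose_mul]
    rw [show Uᵀ * Bᵀ * (B * U) = Uᵀ * (Bᵀ * B) * U by
      simp only [Matrix.mul_assoc]]
    rw [hspec]
    simp only [Matrix.mul_assoc]
  have hUtU : Uᵀ * U = 1 := by
    ext i j
    have := (orthonormal_iff_ite (𝕜 := ℝ)).mp hu i j
    simp only [PiLp.inner_apply, RCLike.inner_apply, starRingEnd_apply, star_trivial] at this
    simp only [Matrix.mul_apply, Matrix.transpose_apply, hUdef, Matrix.of_apply,
      Matrix.one_apply]
    simpa [mul_comm] using this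
  have hVV : Vᵀ * V = 1 := by
    rw [hVt, hVdef, ← Matrix.mul_assoc, Matrix.mul_assoc (Uᵀ) Q Qᵀ, hQQ, Matrix.mul_one, hUtU]
  -- Cauchy-Binet applications
  have hdet1 : (1 : ℝ) = ∑ f ∈ monoFuns r n, (det (V.submatrix f id)) ^ 2 := by
    have h := cauchy_binet Vᵀ V
    rw [hVV, det_one] at h
    rw [h]
    refine Finset.sum_congr rfl fun f _ => ?_
    have : Vᵀ.submatrix id f = (V.submatrix f id)ᵀ := rfl
    rw [this, det_transpose, sq]
  have hdetG : det (Vᵀ * Matrix.diagonal d * V)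
      = ∑ f ∈ monoFuns r n, (∏ j, d (f j)) * (det (V.submatrix f id)) ^ 2 := by
    rw [cauchy_binet (Vᵀ * Matrix.diagonal d) V]
    refine Finset.sum_congr rfl fun f _ => ?_
    have h1 : (Vᵀ * Matrix.diagonal d).submatrix id f
        = Matrix.of (fun i j => d (f j) * (V.submatrix f id)ᵀ i j) := by
      ext i j
      simp [Matrix.mul_apply, Matrix.diagonal, Finset.sum_ite_eq, mul_comm]
    rw [h1, Matrix.det_mul_row, det_transpose, sq]
    ring
  -- key inequality for each monotone f
  have key : ∀ f ∈ monoFuns r n,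
      (∏ i : Fin r, μ (Fin.castLE hr i)) ≤ ∏ j, d (f j) := by
    intro f hf
    have hfmono : StrictMono f := by
      simpa [monoFuns, @Finset.mem_filter _ _ (Classical.decPred _)] using hf
    set g : Fin r → Fin n := fun j => e.symm (f j) with hgdef
    have hginj : Function.Injective g :=
      fun a b hab => hfmono.injective (e.symm.injective hab)
    have hdg : ∀ j, d (f j) = μ (g j) := by
      intro j; rw [hμ]; simp [hgdef]
    set s : Finset (Fin n) := Finset.image g Finset.univ with hsdef
    have hs : s.card = r := by
      rw [hsdef, Finset.card_image_of_injective _ hginj, card_univ, Fintype.card_fin]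
    set h : Fin r → Fin n := ⇑(s.orderEmbOfFin hs) with hhdef
    have himg : Finset.image h Finset.univ = s := by
      ext x
      simp only [Finset.mem_image, Finset.mem_univ, true_and]
      rw [← Finset.mem_coe, ← Finset.range_orderEmbOfFin s hs]
      exact Iff.rfl
    have hprod : (∏ j, d (f j)) = ∏ j, μ (h j) := by
      calc (∏ j, d (f j)) = ∏ j, μ (g j) := by simp_rw [hdg]
        _ = ∏ x ∈ s, μ x := (Finset.prod_image fun a _ b _ hab => hginj hab).symm
        _ = ∏ j, μ (h j) := by
          rw [← himg]
          exact Finset.prod_image fun a _ b _ hab =>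
            (s.orderEmbOfFin hs).injective hab
    rw [hprod]
    refine Finset.prod_le_prod (fun i _ => hμ0 _) (fun i _ => ?_)
    refine hmono ?_
    rw [Fin.le_def]
    exact fin_strictMono_le (s.orderEmbOfFin hs).strictMono i
  -- conclude
  rw [ge_iff_le, hG, hdetG]
  calc (∏ i : Fin r, μ (Fin.castLE hr i))
      = ∑ f ∈ monoFuns r n,
          (∏ i : Fin r, μ (Fin.castLE hr i)) * (det (V.submatrix f id)) ^ 2 := by
        rw [← Finset.mul_sum, ← hdet1, mul_one]
    _ ≤ ∑ f ∈ monoFuns r n, (∏ j, d (f j)) * (det (V.submatrix f id)) ^ 2 := by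
        refine Finset.sum_le_sum fun f hf => ?_
        exact mul_le_mul_of_nonneg_right (key f hf) (sq_nonneg _)
end

section
/- Let B be a real m × n matrix, let r ≤ n, and let μ₁ ≤ μ₂ ≤ … ≤ μₙ be the eigenvalues (with multiplicity, in nondecreasing order) of the symmetric positive semidefinite matrix Bᵀ·B. Then for every orthonormal family of vectors u₁, …, u_r in EuclideanSpace ℝ (Fin n), the determinant of the r × r Gram matrix G with entries Gᵢⱼ = ⟨B·uᵢ, B·uⱼ⟩ satisfies det G ≤ μ_{n−r+1} ⋯ μₙ, the product of the r largest eigenvalues of BᵀB. -/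
open Matrix Finset Equiv

noncomputable instance myDecSM {r n : ℕ} : DecidablePred (fun g : Fin r → Fin n => StrictMono g) :=
  fun _ => Classical.dec _

theorem my_cauchyBinet {R : Type*} [CommRing R] {r n : ℕ}
    (A : Matrix (Fin r) (Fin n) R) (B : Matrix (Fin n) (Fin r) R) :
    det (A * B) = ∑ g : {g : Fin r → Fin n // StrictMono g},
      det (A.submatrix id g.1) * det (B.submatrix g.1 id) := by
  classical
  have step1 : det (A * B) = ∑ f : Fin r → Fin n,
      (∏ i, B (f i) i) * det (A.submatrix id f) := by
    calc det (A * B)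
        = ∑ σ : Perm (Fin r), (Perm.sign σ : ℤ) * ∏ i, ∑ k, A (σ i) k * B k i := by
          simp [det_apply', mul_apply]
      _ = ∑ σ : Perm (Fin r), ∑ f : Fin r → Fin n,
            (Perm.sign σ : ℤ) * ∏ i, A (σ i) (f i) * B (f i) i := by
          simp [Finset.prod_univ_sum, Fintype.piFinset_univ, Finset.mul_sum]
      _ = ∑ f : Fin r → Fin n, ∑ σ : Perm (Fin r),
            (Perm.sign σ : ℤ) * ∏ i, A (σ i) (f i) * B (f i) i := Finset.sum_comm
      _ = ∑ f : Fin r → Fin n, (∏ i, B (f i) i) * det (A.submatrix id f) := by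
          refine Finset.sum_congr rfl fun f _ => ?_
          rw [det_apply', Finset.mul_sum]
          refine Finset.sum_congr rfl fun σ _ => ?_
          simp only [submatrix_apply, id_eq, Finset.prod_mul_distrib]
          ring
  have step2 : det (A * B) = ∑ f ∈ Finset.univ.filter
      (fun f : Fin r → Fin n => Function.Injective f),
      (∏ i, B (f i) i) * det (A.submatrix id f) := by
    rw [step1]
    symm
    apply Finset.sum_subset (Finset.filter_subset _ _)
    intro f _ hf
    simp only [Finset.mem_filter, Finset.mem_univ, true_and] at hf
    obtain ⟨i, j, hij, hne⟩ : ∃ i j, f i = f j ∧ i ≠ j := by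
      unfold Function.Injective at hf
      push_neg at hf
      obtain ⟨i, j, h1, h2⟩ := hf
      exact ⟨i, j, h1, h2⟩
    rw [det_zero_of_column_eq hne (fun k => by simp [hij]), mul_zero]
  rw [step2]
  have step3 : ∑ f ∈ Finset.univ.filter
      (fun f : Fin r → Fin n => Function.Injective f),
      (∏ i, B (f i) i) * det (A.submatrix id f)
      = ∑ p : {g : Fin r → Fin n // StrictMono g} × Perm (Fin r),
          (∏ i, B (p.1.1 (p.2 i)) i) * det (A.submatrix id (p.1.1 ∘ p.2)) := by
    symm
    apply Finset.sum_bij (fun (p : {g : Fin r → Fin n // StrictMono g} × Perm (Fin r)) _ =>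
      (p.1.1 ∘ p.2 : Fin r → Fin n))
    · intro p _
      simp only [Finset.mem_filter, Finset.mem_univ, true_and]
      exact p.1.2.injective.comp p.2.injective
    · intro p _ q _ h
      have hrange : Set.range p.1.1 = Set.range q.1.1 := by
        have : Set.range (p.1.1 ∘ p.2) = Set.range (q.1.1 ∘ q.2) := by rw [h]
        rwa [Set.range_comp, Set.range_comp, p.2.surjective.range_eq,
          q.2.surjective.range_eq, Set.image_univ, Set.image_univ] at this
      have inst : WellFoundedLT (Fin r) := inferInstance
      have hg : p.1.1 = q.1.1 :=
        (@StrictMono.range_inj (Fin r) (Fin n) _ _ inst _ _ p.1.2 q.1.2).mp hrange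
      have hσ : p.2 = q.2 := by
        apply Equiv.ext
        intro i
        apply q.1.2.injective
        have := congrFun h i
        simpa [hg] using this
      exact Prod.ext (Subtype.ext hg) hσ
    · intro f hfmem
      simp only [Finset.mem_filter, Finset.mem_univ, true_and] at hfmem
      set s : Finset (Fin n) := Finset.univ.image f with hs_def
      have hs : s.card = r := by
        rw [hs_def, Finset.card_image_of_injective _ hfmem, Finset.card_univ,
          Fintype.card_fin]
      set g : Fin r → Fin n := ⇑(s.orderEmbOfFin hs) with hg_def
      have hgmono : StrictMono g := (s.orderEmbOfFin hs).strictMono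
      set t : Fin r → Fin r := fun i =>
        (s.orderIsoOfFin hs).symm ⟨f i, Finset.mem_image_of_mem f (Finset.mem_univ i)⟩
        with ht_def
      have htinj : Function.Injective t := by
        intro a b hab
        have := congrArg (s.orderIsoOfFin hs) hab
        simp only [ht_def, OrderIso.apply_symm_apply, Subtype.mk.injEq] at this
        exact hfmem this
      refine ⟨⟨⟨g, hgmono⟩, Equiv.ofBijective t
        ((Fintype.bijective_iff_injective_and_card t).mpr ⟨htinj, rfl⟩)⟩,
        Finset.mem_univ _, ?_⟩
      funext i
      show g (t i) = f i
      rw [hg_def, ← Finset.coe_orderIsoOfFin_apply, ht_def]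
      simp
    · intro p _
      rfl
  rw [step3, Fintype.sum_prod_type]
  refine Finset.sum_congr rfl fun g _ => ?_
  have hsub : ∀ σ : Perm (Fin r),
      A.submatrix id (g.1 ∘ σ) = (A.submatrix id g.1).submatrix id σ := by
    intro σ; rw [submatrix_submatrix]; rfl
  calc ∑ σ : Perm (Fin r), (∏ i, B (g.1 (σ i)) i) * det (A.submatrix id (g.1 ∘ σ))
      = ∑ σ : Perm (Fin r), det (A.submatrix id g.1) *
          ((Perm.sign σ : ℤ) * ∏ i, (B.submatrix g.1 id) (σ i) i) := by
        refine Finset.sum_congr rfl fun σ _ => ?_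
        rw [hsub σ, det_permute']
        simp only [submatrix_apply, id_eq]
        ring
    _ = det (A.submatrix id g.1) * det (B.submatrix g.1 id) := by
        rw [← Finset.mul_sum, ← det_apply']

theorem my_strictMono_le_apply {a b : ℕ} (f : Fin a → Fin b) (hf : StrictMono f)
    (i : Fin a) : (i : ℕ) ≤ f i := by
  have H : ∀ k : ℕ, ∀ h : k < a, k ≤ (f ⟨k, h⟩ : ℕ) := by
    intro k
    induction k with
    | zero => intro h; exact Nat.zero_le _
    | succ k ih =>
      intro h
      have hk' : k < a := by omega
      have h1 := ih hk'
      have h2 : f ⟨k, hk'⟩ < f ⟨k + 1, h⟩ := hf (by simp [Fin.lt_def])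
      have h3 := Fin.lt_def.mp h2
      omega
  have := H i.1 i.2
  simpa using this

theorem my_key {n r : ℕ} (hr : r ≤ n) (μ : Fin n → ℝ) (hmono : Monotone μ)
    (hpos : ∀ i, 0 ≤ μ i) (M : Matrix (Fin n) (Fin r) ℝ) (hM : Mᵀ * M = 1) :
    det (Mᵀ * Matrix.diagonal μ * M) ≤ ∏ i : Fin r, μ (Fin.rev (Fin.castLE hr i)) := by
  have detfac : ∀ g : {g : Fin r → Fin n // StrictMono g},
      det ((Mᵀ * diagonal μ).submatrix id g.1)
        = (∏ j, μ (g.1 j)) * det (M.submatrix g.1 id) := by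
    intro g
    have factor : (Mᵀ * diagonal μ).submatrix id g.1
        = (Mᵀ.submatrix id g.1) * diagonal (μ ∘ g.1) := by
      ext i j
      simp [Matrix.mul_diagonal, submatrix_apply]
    rw [factor, det_mul, det_diagonal]
    have ht : Mᵀ.submatrix id g.1 = (M.submatrix g.1 id)ᵀ := by
      rw [transpose_submatrix]
    rw [ht, det_transpose]
    simp [mul_comm]
  have h1 : det (Mᵀ * Matrix.diagonal μ * M)
      = ∑ g : {g : Fin r → Fin n // StrictMono g},
          (∏ j, μ (g.1 j)) * (det (M.submatrix g.1 id))^2 := by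
    rw [my_cauchyBinet (Mᵀ * diagonal μ) M]
    refine Finset.sum_congr rfl fun g _ => ?_
    rw [detfac g]
    ring
  have h2 : ∑ g : {g : Fin r → Fin n // StrictMono g},
      (det (M.submatrix g.1 id))^2 = 1 := by
    have hcb := my_cauchyBinet Mᵀ M
    rw [hM, det_one] at hcb
    rw [hcb]
    refine Finset.sum_congr rfl fun g _ => ?_
    have ht : Mᵀ.submatrix id g.1 = (M.submatrix g.1 id)ᵀ := by
      rw [transpose_submatrix]
    rw [ht, det_transpose]
    ring
  set P := ∏ i : Fin r, μ (Fin.rev (Fin.castLE hr i)) with hP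
  have bound : ∀ g : {g : Fin r → Fin n // StrictMono g}, ∏ j, μ (g.1 j) ≤ P := by
    intro g
    have hrev : StrictMono (fun i : Fin r => Fin.rev (g.1 (Fin.rev i))) := by
      intro a b hab
      exact Fin.rev_lt_rev.mpr (g.2 (Fin.rev_lt_rev.mpr hab))
    have hup : ∀ i : Fin r, (g.1 i : ℕ) + ((Fin.rev i : Fin r) : ℕ) ≤ n - 1 := by
      intro i
      have := my_strictMono_le_apply _ hrev (Fin.rev i)
      simp only [Fin.rev_rev] at this
      have h1 : ((Fin.rev i : Fin r) : ℕ) = r - 1 - i := by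
        rw [Fin.val_rev]; omega
      have h2 : ((Fin.rev (g.1 i) : Fin n) : ℕ) = n - 1 - (g.1 i) := by
        rw [Fin.val_rev]; omega
      have h3 := (g.1 i).isLt
      omega
    have hPeq : P = ∏ i : Fin r, μ (Fin.rev (Fin.castLE hr (Fin.rev i))) := by
      rw [hP, ← Equiv.prod_comp (Fin.revPerm) (fun i => μ (Fin.rev (Fin.castLE hr i)))]
      rfl
    rw [hPeq]
    apply Finset.prod_le_prod (fun i _ => hpos _)
    intro i _
    apply hmono
    rw [Fin.le_def]
    have h1 := hup i
    have h2 : ((Fin.rev (Fin.castLE hr (Fin.rev i)) : Fin n) : ℕ)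
        = n - 1 - ((Fin.castLE hr (Fin.rev i) : Fin n) : ℕ) := by
      rw [Fin.val_rev]; have := (Fin.castLE hr (Fin.rev i)).isLt; omega
    have h3 : ((Fin.castLE hr (Fin.rev i) : Fin n) : ℕ) = ((Fin.rev i : Fin r) : ℕ) := rfl
    have h4 := i.isLt
    have h5 := (g.1 i).isLt
    omega
  calc det (Mᵀ * Matrix.diagonal μ * M)
      = ∑ g : {g : Fin r → Fin n // StrictMono g},
          (∏ j, μ (g.1 j)) * (det (M.submatrix g.1 id))^2 := h1
    _ ≤ ∑ g : {g : Fin r → Fin n // StrictMono g},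
          P * (det (M.submatrix g.1 id))^2 := by
        refine Finset.sum_le_sum fun g _ => ?_
        exact mul_le_mul_of_nonneg_right (bound g) (sq_nonneg _)
    _ = P := by rw [← Finset.mul_sum, h2, mul_one]


/-- Upper bound for Gram determinants: if `μ` lists the eigenvalues (with multiplicity,
in nondecreasing order) of the positive semidefinite matrix `Bᵀ B`, then for every
orthonormal family `u₁, …, u_r` in `ℝⁿ` the Gram determinant of `B u₁, …, B u_r`
is at most the product `μ_{n−r+1} ⋯ μ_n` of the `r` largest eigenvalues. -/
theorem gram_det_le_prod_largest_eigenvalues (m n r : ℕ) (hr : r ≤ n)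
    (B : Matrix (Fin m) (Fin n) ℝ) (hH : (B.transpose * B).IsHermitian)
    (μ : Fin n → ℝ) (e : Fin n ≃ Fin n) (hμ : μ = hH.eigenvalues ∘ e)
    (hmono : Monotone μ)
    (u : Fin r → EuclideanSpace ℝ (Fin n)) (hu : Orthonormal ℝ u) :
    (Matrix.of fun i j : Fin r =>
        dotProduct (B.mulVec ((EuclideanSpace.equiv (Fin n) ℝ) (u i)))
          (B.mulVec ((EuclideanSpace.equiv (Fin n) ℝ) (u j)))).det
      ≤ ∏ i : Fin r, μ (Fin.rev (Fin.castLE hr i)) := by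
  classical
  set ν : Fin n → ℝ := hH.eigenvalues with hν
  set V : Matrix (Fin n) (Fin n) ℝ := (hH.eigenvectorUnitary : Matrix (Fin n) (Fin n) ℝ)
    with hV
  have hstar : star V = Vᵀ := by
    ext i j
    simp [Matrix.star_apply]
  have hVVt : V * Vᵀ = 1 := by
    rw [← hstar]
    exact Matrix.mem_unitaryGroup_iff.mp hH.eigenvectorUnitary.2
  have hspec : B.transpose * B = V * Matrix.diagonal ν * Vᵀ := by
    have h := hH.spectral_theorem
    rw [Unitary.conjStarAlgAut_apply] at h
    rwa [hstar, RCLike.ofReal_real_eq_id, Function.id_comp] at h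
  -- the matrix of the orthonormal vectors
  set W : Matrix (Fin n) (Fin r) ℝ := Matrix.of fun k j => u j k with hW
  have hWtW : Wᵀ * W = 1 := by
    ext i j
    have h := orthonormal_iff_ite.mp hu i j
    simp only [PiLp.inner_apply, RCLike.inner_apply, conj_trivial] at h
    simp only [Matrix.mul_apply, Matrix.transpose_apply, hW, Matrix.of_apply,
      Matrix.one_apply]
    convert h using 2
    ring
  set M : Matrix (Fin n) (Fin r) ℝ := Vᵀ * W with hM
  have hMt : Mᵀ = Wᵀ * V := by
    rw [hM, Matrix.transpose_mul, Matrix.transpose_transpose]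
  have hMtM : Mᵀ * M = 1 := by
    rw [hMt, hM, Matrix.mul_assoc, ← Matrix.mul_assoc V, hVVt, Matrix.one_mul, hWtW]
  set M' : Matrix (Fin n) (Fin r) ℝ := M.submatrix e id with hM'
  have hM'tM' : M'ᵀ * M' = 1 := by
    rw [← hMtM]
    ext i j
    simp only [Matrix.mul_apply, Matrix.transpose_apply, hM', Matrix.submatrix_apply, id_eq]
    exact Equiv.sum_comp e fun k => M k i * M k j
  -- identify the Gram matrix
  have hG : (Matrix.of fun i j : Fin r =>
      dotProduct (B.mulVec ((EuclideanSpace.equiv (Fin n) ℝ) (u i)))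
        (B.mulVec ((EuclideanSpace.equiv (Fin n) ℝ) (u j))))
      = Wᵀ * (B.transpose * B) * W := by
    ext i j
    have hdot : ∀ x y : Fin n → ℝ,
        dotProduct (B.mulVec x) (B.mulVec y)
          = dotProduct x ((B.transpose * B).mulVec y) := by
      intro x y
      rw [← Matrix.mulVec_mulVec]
      conv_rhs => rw [Matrix.dotProduct_mulVec, Matrix.vecMul_transpose]
    show dotProduct (B.mulVec (u i).ofLp) (B.mulVec (u j).ofLp) = _
    rw [hdot]
    simp only [Matrix.mul_apply, Matrix.mulVec, dotProduct, Matrix.transpose_apply,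
      hW, Matrix.of_apply, Finset.sum_mul, Finset.mul_sum]
    rw [Finset.sum_comm]
    refine Finset.sum_congr rfl fun k _ => Finset.sum_congr rfl fun l _ =>
      Finset.sum_congr rfl fun a _ => by ring
  have hdiagEq : Wᵀ * (B.transpose * B) * W = M'ᵀ * Matrix.diagonal μ * M' := by
    have h1 : Wᵀ * (B.transpose * B) * W = Mᵀ * Matrix.diagonal ν * M := by
      rw [hspec, hMt, hM]
      simp only [Matrix.mul_assoc]
    rw [h1]
    have hcomp : ∀ (N : Matrix (Fin n) (Fin r) ℝ) (d : Fin n → ℝ) (i j : Fin r),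
        (Nᵀ * Matrix.diagonal d * N) i j = ∑ k, d k * (N k i * N k j) := by
      intro N d i j
      rw [Matrix.mul_apply]
      simp only [Matrix.mul_diagonal, Matrix.transpose_apply]
      refine Finset.sum_congr rfl fun k _ => by ring
    ext i j
    rw [hcomp, hcomp]
    have : ∀ k, μ k * (M' k i * M' k j) = ν (e k) * (M (e k) i * M (e k) j) := by
      intro k
      simp [hμ, hM', hν]
    simp only [this]
    exact (Equiv.sum_comp e fun k => ν k * (M k i * M k j)).symm
  rw [hG, hdiagEq]
  exact my_key hr μ hmono (fun i => by
    rw [hμ]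
    exact (Matrix.posSemidef_conjTranspose_mul_self B).eigenvalues_nonneg (e i)) M' hM'tM'
end
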